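/- Chain reduction is closed under abstraction: (1) if B ⟹_{x·S,0} B', then λ^a x.B ⟹_{S,0} λ^a x.B'; (2) if B ⟹_{S,k} B', then λ^a x.B ⟹_{S,k+1} λ^a x.B'. -/
import Mathlib


/-! Variables and labels are represented by natural numbers. -/
abbrev Var := ℕ
abbrev Label := ℕ

/-- The distinguished label `⋆`, which is never bound. -/
def starLabel : Label := 0

/-! ### Terms of the λ-calculus: `M ::= x | M M | λx.M` -/

inductive Tm : Type
  | var : Var → Tm
  | app : Tm → Tm → Tm
  | lam : Var → Tm → Tm
deriving DecidableEq

namespace Tm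

/-- Free variables. -/
def fv : Tm → Finset Var
  | var x => {x}
  | app M N => fv M ∪ fv N
  | lam x M => fv M \ {x}

/-- Capture-avoiding substitution `M[x := N]` (with the usual variable
convention that bound variables of `M` are renamed apart from `N`;
under that convention it is implemented structurally). -/
def subst : Tm → Var → Tm → Tm
  | var y, x, N => if y = x then N else var y
  | app M₁ M₂, x, N => app (subst M₁ x N) (subst M₂ x N)
  | lam y M, x, N => if y = x then lam y M else lam y (subst M x N)

/-- `M ↑ S` : the free variables of `M` are disjoint from the sequence `S`. -/
def away (M : Tm) (S : List Var) : Prop := ∀ x ∈ S, x ∉ M.fv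

end Tm

/-- Iterated abstraction `λx₁…xₙ.M`. -/
def lamList : List Var → Tm → Tm
  | [], M => M
  | x :: xs, M => Tm.lam x (lamList xs M)

/-! ### Contexts -/

inductive Ctx : Type
  | hole : Ctx
  | appL : Ctx → Tm → Ctx
  | appR : Tm → Ctx → Ctx
  | lam : Var → Ctx → Ctx

namespace Ctx

/-- `C[M]`: fill the hole of `C` with `M` (possibly binding free variables of `M`). -/
def fill : Ctx → Tm → Tm
  | hole, M => M
  | appL C N, M => .app (C.fill M) N
  | appR N C, M => .app N (C.fill M)
  | lam x C, M => .lam x (C.fill M)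

/-- The binding path of a context: the sequence of variables bound above the
hole, innermost first. -/
def bPath : Ctx → List Var
  | hole => []
  | appL C _ => C.bPath
  | appR _ C => C.bPath
  | lam x C => C.bPath ++ [x]

end Ctx

/-- Weak reduction of the weak λ-calculus: `C[(λx.P)Q] → C[P[x:=Q]]`
provided `(λx.P)Q ↑ bPath C`. -/
inductive WStep : Tm → Tm → Prop
  | step (C : Ctx) (x : Var) (P Q : Tm) :
      Tm.away (.app (.lam x P) Q) C.bPath →
      WStep (C.fill (.app (.lam x P) Q)) (C.fill (P.subst x Q))

/-- Many-step weak reduction. -/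
def WSteps : Tm → Tm → Prop := Relation.ReflTransGen WStep



/-! ### Labeled terms: `A ::= x | λᵃx.A | A @ᵃ B`.
In `A @ᵃ B` the depicted label `a` binds all free occurrences of `a` in `A`. -/

inductive LTm : Type
  | var : Var → LTm
  | lam : Label → Var → LTm → LTm
  | app : Label → LTm → LTm → LTm
deriving DecidableEq

namespace LTm

/-- Free variables of a labeled term. -/
def fv : LTm → Finset Var
  | var x => {x}
  | lam _ x A => fv A \ {x}
  | app _ A B => fv A ∪ fv B

/-- Free labels: `fl(x) = ∅`, `fl(λᵃx.A) = {a} ∪ fl(A)`,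
`fl(A @ᵃ B) = (fl(A) ∖ {a}) ∪ fl(B)`. -/
def fl : LTm → Finset Label
  | var _ => ∅
  | lam a _ A => insert a (fl A)
  | app a A B => (fl A \ {a}) ∪ fl B

/-- `A[a := ⋆]`: replace all free occurrences of the label `a` by `⋆`. -/
def relabel : LTm → Label → LTm
  | var x, _ => var x
  | lam b x A, a => lam (if b = a then starLabel else b) x (relabel A a)
  | app b A B, a => app b (if b = a then A else relabel A a) (relabel B a)

/-- Substitution `A[x := B]`, capture-avoiding for both variables and labels
(under the convention that bound variables and bound labels of `A` are renamed
apart from those of `B`, it is implemented structurally). -/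
def subst : LTm → Var → LTm → LTm
  | var y, x, B => if y = x then B else var y
  | lam a y A, x, B => if y = x then lam a y A else lam a y (subst A x B)
  | app a A₁ A₂, x, B => app a (subst A₁ x B) (subst A₂ x B)

/-- `A ↑ S`: the free variables of `A` are disjoint from the sequence `S`. -/
def away (A : LTm) (S : List Var) : Prop := ∀ x ∈ S, x ∉ A.fv

instance away.dec (A : LTm) (S : List Var) : Decidable (A.away S) := by
  unfold away; infer_instance

end LTm

/-- Iterated labeled abstraction `λ^{a₁…aₙ} x₁…xₙ.A`. -/
def llamList : List (Label × Var) → LTm → LTm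
  | [], A => A
  | (a, x) :: ps, A => LTm.lam a x (llamList ps A)

/-! ### Labeled contexts -/

inductive LCtx : Type
  | hole : LCtx
  | lam : Label → Var → LCtx → LCtx
  | appL : Label → LCtx → LTm → LCtx
  | appR : Label → LTm → LCtx → LCtx

namespace LCtx

def fill : LCtx → LTm → LTm
  | hole, A => A
  | lam a x C, A => .lam a x (C.fill A)
  | appL a C B, A => .app a (C.fill A) B
  | appR a B C, A => .app a B (C.fill A)

/-- Binding path of a labeled context (variables bound above the hole,
innermost first). -/
def bPath : LCtx → List Var
  | hole => []
  | lam _ x C => C.bPath ++ [x]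
  | appL _ C _ => C.bPath
  | appR _ _ C => C.bPath

/-- Composition of contexts: `(C₁.comp C₂)[A] = C₁[C₂[A]]`. -/
def comp : LCtx → LCtx → LCtx
  | hole, D => D
  | lam a x C, D => lam a x (C.comp D)
  | appL a C B, D => appL a (C.comp D) B
  | appR a B C, D => appR a B (C.comp D)

end LCtx

/-- Labeled weak reduction `A →_S B`:
`C[(λᵃx.A') @ᵃ B'] →_S C[A'[a:=⋆][x:=B']]` provided
`(λᵃx.A') @ᵃ B' ↑ bPath(C) ⊕ S`. -/
inductive LStep : List Var → LTm → LTm → Prop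
  | step (S : List Var) (C : LCtx) (a : Label) (x : Var) (A B : LTm) :
      LTm.away (.app a (.lam a x A) B) (C.bPath ++ S) →
      LStep S (C.fill (.app a (.lam a x A) B)) (C.fill ((A.relabel a).subst x B))

/-- Many-step labeled weak reduction `A ↠_S B`. -/
def LSteps (S : List Var) : LTm → LTm → Prop := Relation.ReflTransGen (LStep S)

/-- `LStepVia S C Δ Δ'`: the labeled reduction step under `S` which contracts
the redex `Δ` (with contractum `Δ'`) in the context `C`; the corresponding
step is `C[Δ] →_S C[Δ']`. -/
inductive LStepVia : List Var → LCtx → LTm → LTm → Prop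
  | mk (S : List Var) (C : LCtx) (a : Label) (x : Var) (A B : LTm) :
      LTm.away (.app a (.lam a x A) B) (C.bPath ++ S) →
      LStepVia S C (.app a (.lam a x A) B) ((A.relabel a).subst x B)

/-- Erasure `|A|` of all labels of a labeled term. -/
def eraseL : LTm → Tm
  | .var x => .var x
  | .lam _ x A => .lam x (eraseL A)
  | .app _ A B => .app (eraseL A) (eraseL B)
/-! ### The superstep judgement `M ⊳_{S,k} N` on unlabeled terms. -/

inductive Super : List Var → ℕ → Tm → Tm → Prop
  | var (S : List Var) (x : Var) : Super S 0 (.var x) (.var x)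
  | abs1 (S : List Var) (x : Var) (M M' : Tm) :
      Super (x :: S) 0 M M' → Super S 0 (.lam x M) (.lam x M')
  | abs2 (S : List Var) (k : ℕ) (x : Var) (M M' : Tm) :
      Super S k M M' → Super S (k + 1) (.lam x M) (.lam x M')
  | app1 (S : List Var) (M M' N N' : Tm) :
      Super S 0 M M' → Super S 0 N N' → Super S 0 (.app M N) (.app M' N')
  | app2 (S : List Var) (n m : ℕ) (x : Var) (M M' N N' : Tm) :
      Super S (n + 1) M (.lam x M') → Super S m N N' →
      Tm.away (.app (.lam x M') N') S →
      (0 < m → ∃ xs : List Var, xs.length = n ∧ M' = lamList xs (.var x)) →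
      Super S (n + m) (.app M N) (M'.subst x N')

/-! ### The labeled superstep judgement `A ⇛_{S,k} B`. -/

inductive LSuper : List Var → ℕ → LTm → LTm → Prop
  | var (S : List Var) (x : Var) : LSuper S 0 (.var x) (.var x)
  | abs1 (S : List Var) (a : Label) (x : Var) (A A' : LTm) :
      LSuper (x :: S) 0 A A' → LSuper S 0 (.lam a x A) (.lam a x A')
  | abs2 (S : List Var) (k : ℕ) (a : Label) (x : Var) (A A' : LTm) :
      LSuper S k A A' → LSuper S (k + 1) (.lam a x A) (.lam a x A')
  | app1 (S : List Var) (a : Label) (A A' B B' : LTm) :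
      LSuper S 0 A A' → LSuper S 0 B B' →
      LSuper S 0 (.app a A B) (.app a A' B')
  | app2 (S : List Var) (n m : ℕ) (a : Label) (x : Var) (A A' B B' : LTm) :
      LSuper S (n + 1) A (.lam a x A') → LSuper S m B B' →
      LTm.away (.app a (.lam a x A') B') S →
      (0 < m → ∃ ps : List (Label × Var), ps.length = n ∧ A' = llamList ps (.var x)) →
      LSuper S (n + m) (.app a A B) ((A'.relabel a).subst x B')

/-! ### Chain reduction `A ⟹_{S,k} B`, by induction on `k`. -/

def Chain (S : List Var) : ℕ → LTm → LTm → Prop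
  | 0, A, B => LSteps S A B
  | k + 1, A, B => ∃ (a : Label) (x : Var) (A₁ A₂ : LTm),
      LSteps S A (.lam a x A₁) ∧ Chain S k A₁ A₂ ∧ B = .lam a x A₂

/-- `A` is in `→_∅`-normal form. -/
def LNormal (A : LTm) : Prop := ∀ B : LTm, ¬ LStep [] A B

/-- A labeled term is initially labeled iff all its abstractions carry
pairwise distinct labels. -/
def absLabels : LTm → List Label
  | .var _ => []
  | .lam a _ A => a :: absLabels A
  | .app _ A B => absLabels A ++ absLabels B

def InitiallyLabeled (A : LTm) : Prop := (absLabels A).Nodup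
/-! ### Full weak superdevelopment `A↡(S,k)` (a partial function, modeled
with `Option`). -/

/-- `isVarSpine n x A` holds iff `A = λ^{a₁…aₙ} x₁…xₙ.x`. -/
def isVarSpine : ℕ → Var → LTm → Bool
  | 0, x, .var y => y = x
  | n + 1, x, .lam _ _ A => isVarSpine n x A
  | _, _, _ => false

/-- The full weak superdevelopment `A↡(S,k)`:
`x↡(S,0) = x`; `(λᵃx.A)↡(S,0) = λᵃx.(A↡(x·S,0))`;
`(λᵃx.A)↡(S,k+1) = λᵃx.(A↡(S,k))`; and
`(A @ᵃ B)↡(S,k) = A'[a:=⋆][x:=B']` if condition (⋆) holds, and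
`= (A↡(S,0)) @ᵃ (B↡(S,0))` if (⋆) fails and `k = 0`, where (⋆) requires
`n, m ≥ 0` with `n + m = k`, `A↡(S,n+1) = λᵃx.A' = λ^{a a₁…aₙ} x x₁…xₙ.A''`,
`B↡(S,m) = B'`, `(m > 0 → A'' = x)` and `(λᵃx.A') @ᵃ B' ↑ S`. -/
def fullDev : LTm → List Var → ℕ → Option LTm
  | .var x, _, k => if k = 0 then some (.var x) else none
  | .lam a x A, S, 0 => (fullDev A (x :: S) 0).map (fun A' => .lam a x A')
  | .lam a x A, S, k + 1 => (fullDev A S k).map (fun A' => .lam a x A')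
  | .app a A B, S, k =>
      match (List.range (k + 1)).findSome? (fun n =>
        match fullDev A S (n + 1), fullDev B S (k - n) with
        | some (.lam a' x A'), some B' =>
            if a' = a ∧ (0 < k - n → isVarSpine n x A' = true) ∧
                LTm.away (.app a (.lam a x A') B') S then
              some ((A'.relabel a).subst x B')
            else none
        | _, _ => none) with
      | some r => some r
      | none =>
          if k = 0 then
            match fullDev A S 0, fullDev B S 0 with
            | some A', some B' => some (.app a A' B')
            | _, _ => none
          else none
termination_by A _ _ => sizeOf A
decreasing_by all_goals simp_wf <;> omega

lemma lstep_lam {S : List Var} {x : Var} {a : Label} {B B' : LTm}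
    (h : LStep (x :: S) B B') : LStep S (.lam a x B) (.lam a x B') := by
  rcases h with ⟨C, b, y, A, Bq, haw⟩
  have := LStep.step S (LCtx.lam a x C) b y A Bq (by
    intro z hz
    apply haw z
    simp [LCtx.bPath] at hz ⊢
    tauto)
  simpa [LCtx.fill] using this

lemma lsteps_lam {S : List Var} {x : Var} {a : Label} {B B' : LTm}
    (h : LSteps (x :: S) B B') : LSteps S (.lam a x B) (.lam a x B') := by
  induction h with
  | refl => exact Relation.ReflTransGen.refl
  | tail _ hs ih => exact Relation.ReflTransGen.tail ih (lstep_lam hs)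

/-- **Chain reduction is closed under abstraction** (Lem. 8):
(1) if `B ⟹_{x·S,0} B'` then `λᵃx.B ⟹_{S,0} λᵃx.B'`;
(2) if `B ⟹_{S,k} B'` then `λᵃx.B ⟹_{S,k+1} λᵃx.B'`. -/
theorem chain_abs :
    (∀ (S : List Var) (a : Label) (x : Var) (B B' : LTm),
        Chain (x :: S) 0 B B' → Chain S 0 (.lam a x B) (.lam a x B')) ∧
    (∀ (S : List Var) (k : ℕ) (a : Label) (x : Var) (B B' : LTm),
        Chain S k B B' → Chain S (k + 1) (.lam a x B) (.lam a x B')) := by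
  constructor
  · intro S a x B B' h
    exact lsteps_lam h
  · intro S k a x B B' h
    exact ⟨a, x, B, B', Relation.ReflTransGen.refl, h, rfl⟩
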